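/- arXiv:1306.6569 — 3 statements merged into one kernel-verified Lean document; each statement's English description precedes it below -/
import Mathlib

section
/- (Proposition 2.1) Let x ∈ X_pq be a stationary configuration which is a global minimizer (or a global maximizer) of W_pq over X_pq, and let z ∈ X_pq be stationary with z ≠ x. Then z does not lie on the boundary of the order cones V_+(x) = {y ∈ X_pq | x ≤ y} and V_-(x) = {y ∈ X_pq | y ≤ x}: it is impossible that x ≤ z while x_k = z_k for some k ∈ ℤ, and impossible that z ≤ x while z_k = x_k for some k ∈ ℤ. -/
/-- First partial derivative of the generating function. -/
noncomputable def pd1 (h : ℝ → ℝ → ℝ) (a b : ℝ) : ℝ := deriv (fun s => h s b) a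

/-- Second partial derivative of the generating function. -/
noncomputable def pd2 (h : ℝ → ℝ → ℝ) (a b : ℝ) : ℝ := deriv (fun s => h a s) b

/-- Mixed second partial derivative ∂₁∂₂h. -/
noncomputable def pd12 (h : ℝ → ℝ → ℝ) (a b : ℝ) : ℝ := deriv (fun s => pd2 h s b) a

/-- The space of (p,q)-configurations: x (n+q) = x n + p. -/
def IsConfig (p : ℤ) (q : ℕ) (x : ℤ → ℝ) : Prop := ∀ n : ℤ, x (n + (q : ℤ)) = x n + (p : ℝ)

/-- Stationary configuration: the gradient of the action vanishes. -/
def Stationary (h : ℝ → ℝ → ℝ) (x : ℤ → ℝ) : Prop :=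
  ∀ k : ℤ, pd2 h (x (k - 1)) (x k) + pd1 h (x k) (x (k + 1)) = 0

/-- The periodic action W_pq. -/
noncomputable def W (h : ℝ → ℝ → ℝ) (q : ℕ) (x : ℤ → ℝ) : ℝ :=
  ∑ k ∈ Finset.range q, h (x (k : ℤ)) (x ((k : ℤ) + 1))

section aux
variable {h : ℝ → ℝ → ℝ} (hC2 : ContDiff ℝ 2 (Function.uncurry h))
include hC2

lemma hdiff : Differentiable ℝ (Function.uncurry h) :=
  hC2.differentiable (by norm_num)

lemma hdiff' : Differentiable ℝ (fderiv ℝ (Function.uncurry h)) :=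
  (hC2.fderiv_right (m := 1) (le_refl 2)).differentiable one_ne_zero

lemma pd1_eq (a b : ℝ) :
    pd1 h a b = (fderiv ℝ (Function.uncurry h) (a, b)) (1, 0) := by
  have h1 : HasDerivAt (fun s : ℝ => ((s, b) : ℝ × ℝ)) (1, 0) a :=
    (hasDerivAt_id a).prodMk (hasDerivAt_const a b)
  have h2 := ((hdiff hC2 (a, b)).hasFDerivAt).comp_hasDerivAt a h1
  exact h2.deriv

lemma pd2_eq (a b : ℝ) :
    pd2 h a b = (fderiv ℝ (Function.uncurry h) (a, b)) (0, 1) := by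
  have h1 : HasDerivAt (fun s : ℝ => ((a, s) : ℝ × ℝ)) (0, 1) b :=
    (hasDerivAt_const b a).prodMk (hasDerivAt_id b)
  have h2 := ((hdiff hC2 (a, b)).hasFDerivAt).comp_hasDerivAt b h1
  exact h2.deriv

lemma deriv_pd2_slice (a b : ℝ) :
    HasDerivAt (fun s : ℝ => pd2 h s b)
      ((fderiv ℝ (fderiv ℝ (Function.uncurry h)) (a, b) (1, 0)) (0, 1)) a := by
  have h1 : HasDerivAt (fun s : ℝ => ((s, b) : ℝ × ℝ)) (1, 0) a :=
    (hasDerivAt_id a).prodMk (hasDerivAt_const a b)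
  have h2 := ((hdiff' hC2 (a, b)).hasFDerivAt).comp_hasDerivAt a h1
  have h3 := ((ContinuousLinearMap.apply ℝ ℝ (((0:ℝ), (1:ℝ)) : ℝ × ℝ)).hasFDerivAt).comp_hasDerivAt a h2
  have heq : (fun s : ℝ => (fderiv ℝ (Function.uncurry h) (s, b)) (0, 1))
      = fun s : ℝ => pd2 h s b := funext fun s => (pd2_eq hC2 s b).symm
  rw [← heq]; simpa [Function.comp_def] using h3

lemma deriv_pd1_slice (a b : ℝ) :
    HasDerivAt (fun t : ℝ => pd1 h a t)
      ((fderiv ℝ (fderiv ℝ (Function.uncurry h)) (a, b) (0, 1)) (1, 0)) b := by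
  have h1 : HasDerivAt (fun t : ℝ => ((a, t) : ℝ × ℝ)) (0, 1) b :=
    (hasDerivAt_const b a).prodMk (hasDerivAt_id b)
  have h2 := ((hdiff' hC2 (a, b)).hasFDerivAt).comp_hasDerivAt b h1
  have h3 := ((ContinuousLinearMap.apply ℝ ℝ (((1:ℝ), (0:ℝ)) : ℝ × ℝ)).hasFDerivAt).comp_hasDerivAt b h2
  have heq : (fun t : ℝ => (fderiv ℝ (Function.uncurry h) (a, t)) (1, 0))
      = fun t : ℝ => pd1 h a t := funext fun t => (pd1_eq hC2 a t).symm
  rw [← heq]; simpa [Function.comp_def] using h3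

lemma pd12_eq (a b : ℝ) :
    pd12 h a b = (fderiv ℝ (fderiv ℝ (Function.uncurry h)) (a, b) (1, 0)) (0, 1) :=
  (deriv_pd2_slice hC2 a b).deriv

lemma deriv_pd1_eq_pd12 (a b : ℝ) :
    deriv (fun t : ℝ => pd1 h a t) b = pd12 h a b := by
  rw [(deriv_pd1_slice hC2 a b).deriv, pd12_eq hC2]
  exact (second_derivative_symmetric (fun y => ((hdiff hC2 y).hasFDerivAt))
    ((hdiff' hC2 (a, b)).hasFDerivAt) _ _).symm

lemma pd2_strictAnti (htwist : ∀ a b : ℝ, pd12 h a b < 0) (b : ℝ) :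
    StrictAnti (fun s => pd2 h s b) :=
  strictAnti_of_deriv_neg fun a => htwist a b

lemma pd1_strictAnti (htwist : ∀ a b : ℝ, pd12 h a b < 0) (a : ℝ) :
    StrictAnti (fun t => pd1 h a t) :=
  strictAnti_of_deriv_neg fun b => by rw [deriv_pd1_eq_pd12 hC2]; exact htwist a b

end aux

section main
variable {h : ℝ → ℝ → ℝ} (hC2 : ContDiff ℝ 2 (Function.uncurry h))
  (htwist : ∀ a b : ℝ, pd12 h a b < 0)
include hC2 htwist

lemma propagate {x z : ℤ → ℝ} (hxs : Stationary h x) (hzs : Stationary h z)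
    (hle : ∀ n, x n ≤ z n) {k : ℤ} (hk : x k = z k) :
    x (k - 1) = z (k - 1) ∧ x (k + 1) = z (k + 1) := by
  have hx0 := hxs k
  have hz0 := hzs k
  rw [← hk] at hz0
  have h1 : pd2 h (z (k-1)) (x k) ≤ pd2 h (x (k-1)) (x k) :=
    (pd2_strictAnti hC2 htwist (x k)).antitone (hle (k-1))
  have h2 : pd1 h (x k) (z (k+1)) ≤ pd1 h (x k) (x (k+1)) :=
    (pd1_strictAnti hC2 htwist (x k)).antitone (hle (k+1))
  have e1 : pd2 h (x (k-1)) (x k) = pd2 h (z (k-1)) (x k) := by linarith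
  have e2 : pd1 h (x k) (x (k+1)) = pd1 h (x k) (z (k+1)) := by linarith
  exact ⟨(pd2_strictAnti hC2 htwist (x k)).injective e1,
    (pd1_strictAnti hC2 htwist (x k)).injective e2⟩

lemma touch_eq {x z : ℤ → ℝ} (hxs : Stationary h x) (hzs : Stationary h z)
    (hle : ∀ n, x n ≤ z n) {k : ℤ} (hk : x k = z k) : ∀ n, x n = z n := by
  have key : ∀ m : ℤ, x (k + m) = z (k + m) := by
    intro m
    induction m using Int.induction_on with
    | zero => simpa using hk
    | succ n ih =>
        have h := (propagate hC2 htwist hxs hzs hle ih).2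
        rw [show k + (↑n + 1) = k + ↑n + 1 by ring]; exact h
    | pred n ih =>
        have h := (propagate hC2 htwist hxs hzs hle ih).1
        rw [show k + (-↑n - 1) = k + -↑n - 1 by ring]; exact h
  intro n
  have := key (n - k)
  rwa [show k + (n - k) = n by ring] at this

end main

/-- Proposition 2.1: no stationary state z ≠ x can lie on the boundary of the
order cones V₊(x), V₋(x) of a global minimizer (or maximizer) x of W_pq. -/
theorem no_stationary_on_cone_boundary
    (p : ℤ) (q : ℕ) (hq : 0 < q) (hpq : IsCoprime p (q : ℤ))
    (h : ℝ → ℝ → ℝ) (hC2 : ContDiff ℝ 2 (Function.uncurry h))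
    (htwist : ∀ a b : ℝ, pd12 h a b < 0)
    (hper : ∀ a b : ℝ, h (a + 1) (b + 1) = h a b)
    (x : ℤ → ℝ) (hx : IsConfig p q x) (hxs : Stationary h x)
    (hext : (∀ y : ℤ → ℝ, IsConfig p q y → W h q x ≤ W h q y) ∨
            (∀ y : ℤ → ℝ, IsConfig p q y → W h q y ≤ W h q x))
    (z : ℤ → ℝ) (hz : IsConfig p q z) (hzs : Stationary h z) (hzx : z ≠ x) :
    ¬ ((∀ k : ℤ, x k ≤ z k) ∧ ∃ k : ℤ, x k = z k) ∧
    ¬ ((∀ k : ℤ, z k ≤ x k) ∧ ∃ k : ℤ, z k = x k) := by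
  constructor
  · rintro ⟨hle, k, hk⟩
    exact hzx (funext fun n => (touch_eq hC2 htwist hxs hzs hle hk n).symm)
  · rintro ⟨hle, k, hk⟩
    exact hzx (funext fun n => touch_eq hC2 htwist hzs hxs hle hk n)
end

section
/- (Cooperativity / Kamke condition) Define the gradient vector field G on X_pq by G(w)_k = -(∂₂h(w_{k-1}, w_k) + ∂₁h(w_k, w_{k+1})). If x, y ∈ X_pq satisfy x ≤ y and x_k = y_k for some k ∈ ℤ, then G(x)_k ≤ G(y)_k; moreover this inequality is strict whenever x_{k-1} < y_{k-1} or x_{k+1} < y_{k+1}. -/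
/-- The gradient vector field of the (minus) action:
    G(w)_k = -(∂₂h(w_{k-1}, w_k) + ∂₁h(w_k, w_{k+1})). -/
noncomputable def gradVF (h : ℝ → ℝ → ℝ) (w : ℤ → ℝ) (k : ℤ) : ℝ :=
  -(pd2 h (w (k - 1)) (w k) + pd1 h (w k) (w (k + 1)))

lemma pd1_deriv_eq_pd12 (h : ℝ → ℝ → ℝ) (hC2 : ContDiff ℝ 2 (Function.uncurry h))
    (a b : ℝ) : deriv (fun t => pd1 h a t) b = pd12 h a b := by
  set H := Function.uncurry h with hH
  have hdiff : Differentiable ℝ H := hC2.differentiable (by norm_num)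
  have hd1 : ∀ z, HasFDerivAt H (fderiv ℝ H z) z := fun z => (hdiff z).hasFDerivAt
  have hC1' : ContDiff ℝ 1 (fderiv ℝ H) := hC2.fderiv_right (by norm_num)
  have hdiff' : Differentiable ℝ (fderiv ℝ H) := hC1'.differentiable (by norm_num)
  have hd2 : ∀ z, HasFDerivAt (fderiv ℝ H) (fderiv ℝ (fderiv ℝ H) z) z :=
    fun z => (hdiff' z).hasFDerivAt
  -- directional curves
  have curveA : ∀ (u v : ℝ), HasDerivAt (fun s : ℝ => (s, v)) ((1:ℝ), (0:ℝ)) u := by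
    intro u v
    simpa using HasDerivAt.prodMk (hasDerivAt_id u) (hasDerivAt_const u v)
  have curveB : ∀ (u v : ℝ), HasDerivAt (fun s : ℝ => (u, s)) ((0:ℝ), (1:ℝ)) v := by
    intro u v
    simpa using HasDerivAt.prodMk (hasDerivAt_const v u) (hasDerivAt_id v)
  -- pd1 h u v = fderiv H (u,v) (1,0)
  have lemA : ∀ u v : ℝ, HasDerivAt (fun s => h s v) (fderiv ℝ H (u, v) (1, 0)) u := by
    intro u v
    have := (hd1 (u, v)).comp_hasDerivAt u (curveA u v)
    simpa [Function.comp_def, hH, Function.uncurry] using this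
  have lemB : ∀ u v : ℝ, HasDerivAt (fun s => h u s) (fderiv ℝ H (u, v) (0, 1)) v := by
    intro u v
    have := (hd1 (u, v)).comp_hasDerivAt v (curveB u v)
    simpa [Function.comp_def, hH, Function.uncurry] using this
  have epd1 : ∀ u v : ℝ, pd1 h u v = fderiv ℝ H (u, v) (1, 0) := fun u v => (lemA u v).deriv
  have epd2 : ∀ u v : ℝ, pd2 h u v = fderiv ℝ H (u, v) (0, 1) := fun u v => (lemB u v).deriv
  -- derivative of s ↦ fderiv H (s,b) (0,1) at a
  have hcA : HasDerivAt (fun s : ℝ => fderiv ℝ H (s, b))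
      (fderiv ℝ (fderiv ℝ H) (a, b) (1, 0)) a := by
    have := (hd2 (a, b)).comp_hasDerivAt a (curveA a b)
    simpa [Function.comp_def] using this
  have hcB : HasDerivAt (fun t : ℝ => fderiv ℝ H (a, t))
      (fderiv ℝ (fderiv ℝ H) (a, b) (0, 1)) b := by
    have := (hd2 (a, b)).comp_hasDerivAt b (curveB a b)
    simpa [Function.comp_def] using this
  have hC : HasDerivAt (fun s : ℝ => fderiv ℝ H (s, b) (0, 1))
      (fderiv ℝ (fderiv ℝ H) (a, b) (1, 0) (0, 1)) a := by
    simpa using hcA.clm_apply (hasDerivAt_const a ((0:ℝ), (1:ℝ)))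
  have hD : HasDerivAt (fun t : ℝ => fderiv ℝ H (a, t) (1, 0))
      (fderiv ℝ (fderiv ℝ H) (a, b) (0, 1) (1, 0)) b := by
    simpa using hcB.clm_apply (hasDerivAt_const b ((1:ℝ), (0:ℝ)))
  have hsymm := second_derivative_symmetric hd1 (hd2 (a, b)) ((1:ℝ), (0:ℝ)) ((0:ℝ), (1:ℝ))
  have e12 : pd12 h a b = fderiv ℝ (fderiv ℝ H) (a, b) (1, 0) (0, 1) := by
    have : (fun s => pd2 h s b) = fun s : ℝ => fderiv ℝ H (s, b) (0, 1) := by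
      funext s; exact epd2 s b
    rw [pd12, this]; exact hC.deriv
  have e21 : deriv (fun t => pd1 h a t) b = fderiv ℝ (fderiv ℝ H) (a, b) (0, 1) (1, 0) := by
    have : (fun t => pd1 h a t) = fun t : ℝ => fderiv ℝ H (a, t) (1, 0) := by
      funext t; exact epd1 a t
    rw [this]; exact hD.deriv
  rw [e21, e12, hsymm]

/-- Cooperativity (Kamke condition) of the gradient vector field. -/
theorem kamke_condition
    (p : ℤ) (q : ℕ) (hq : 0 < q) (hpq : IsCoprime p (q : ℤ))
    (h : ℝ → ℝ → ℝ) (hC2 : ContDiff ℝ 2 (Function.uncurry h))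
    (htwist : ∀ a b : ℝ, pd12 h a b < 0)
    (hper : ∀ a b : ℝ, h (a + 1) (b + 1) = h a b)
    (x y : ℤ → ℝ) (hx : IsConfig p q x) (hy : IsConfig p q y)
    (hle : ∀ n : ℤ, x n ≤ y n) (k : ℤ) (heq : x k = y k) :
    gradVF h x k ≤ gradVF h y k ∧
    ((x (k - 1) < y (k - 1) ∨ x (k + 1) < y (k + 1)) → gradVF h x k < gradVF h y k) := by
  have sa2 : ∀ v : ℝ, StrictAnti (fun u => pd2 h u v) := by
    intro v
    exact strictAnti_of_deriv_neg (fun u => htwist u v)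
  have sa1 : ∀ u : ℝ, StrictAnti (fun v => pd1 h u v) := by
    intro u
    refine strictAnti_of_deriv_neg (fun v => ?_)
    rw [pd1_deriv_eq_pd12 h hC2 u v]
    exact htwist u v
  have hA : pd2 h (y (k - 1)) (y k) ≤ pd2 h (x (k - 1)) (x k) := by
    rw [heq]
    exact (sa2 (y k)).antitone (hle (k - 1))
  have hB : pd1 h (y k) (y (k + 1)) ≤ pd1 h (x k) (x (k + 1)) := by
    rw [heq]
    exact (sa1 (y k)).antitone (hle (k + 1))
  constructor
  · simp only [gradVF]; linarith
  · rintro (hlt | hlt)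
    · have hA' : pd2 h (y (k - 1)) (y k) < pd2 h (x (k - 1)) (x k) := by
        rw [heq]; exact sa2 (y k) hlt
      simp only [gradVF]; linarith
    · have hB' : pd1 h (y k) (y (k + 1)) < pd1 h (x k) (x (k + 1)) := by
        rw [heq]; exact sa1 (y k) hlt
      simp only [gradVF]; linarith
end

section
/- (Global existence and uniqueness of the gradient semiflow) For every x ∈ X_pq there exists a unique solution ξ : [0,∞) → X_pq of the gradient flow with ξ(0) = x. -/
open Set

/-- A solution of the gradient flow of the periodic action on a set I ⊆ ℝ. -/
def IsGradSol (h : ℝ → ℝ → ℝ) (p : ℤ) (q : ℕ) (I : Set ℝ) (ξ : ℝ → ℤ → ℝ) : Prop :=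
  (∀ t ∈ I, IsConfig p q (ξ t)) ∧
  ∀ k : ℤ, ∀ t ∈ I, HasDerivWithinAt (fun s => ξ s k)
    (-(pd2 h (ξ t (k - 1)) (ξ t k) + pd1 h (ξ t k) (ξ t (k + 1)))) I t

section ODEglobal

section ODEglobal

variable {E : Type*} [NormedAddCommGroup E] [NormedSpace ℝ E] [CompleteSpace E]

lemma ode_step {v : E → E} {K : NNReal} (hv : LipschitzWith K v) (t₀ : ℝ) (y : E) :
    ∃ f : ℝ → E, f t₀ = y ∧ ∀ t ∈ Icc t₀ (t₀ + 1/(1+(K:ℝ))),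
      HasDerivWithinAt f (v (f t)) (Icc t₀ (t₀ + 1/(1+(K:ℝ)))) t := by
  have hK : (0:ℝ) < 1 + (K:ℝ) := by positivity
  have hδ0 : (0:ℝ) < 1/(1+(K:ℝ)) := by positivity
  have hpl : IsPicardLindelof (fun _ x => v x) (tmin := t₀) (tmax := t₀ + 1/(1+(K:ℝ)))
      ⟨t₀, le_refl _, by linarith⟩ y (‖v y‖₊ + 1) 0 (‖v y‖₊ + K * (‖v y‖₊ + 1)) K := by
    apply IsPicardLindelof.of_time_independent
    · intro x hx
      have h1 : dist (v x) (v y) ≤ (K:ℝ) * dist x y := hv.dist_le_mul x y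
      have h2 : dist x y ≤ ‖v y‖ + 1 := by
        have := Metric.mem_closedBall.mp hx
        push_cast at this
        exact this
      have h3 : ‖v x‖ ≤ ‖v y‖ + dist (v x) (v y) := by
        rw [dist_eq_norm]
        calc ‖v x‖ = ‖v y + (v x - v y)‖ := by rw [add_sub_cancel]
          _ ≤ ‖v y‖ + ‖v x - v y‖ := norm_add_le _ _
      have h4 : (K:ℝ) * dist x y ≤ (K:ℝ) * (‖v y‖ + 1) :=
        mul_le_mul_of_nonneg_left h2 K.coe_nonneg
      push_cast
      linarith
    · exact hv.lipschitzOnWith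
    · have hmax : max (t₀ + 1/(1+(K:ℝ)) - t₀) (t₀ - t₀) = 1/(1+(K:ℝ)) := by
        rw [add_sub_cancel_left, sub_self]
        exact max_eq_left hδ0.le
      simp only [tsub_zero]
      push_cast
      rw [hmax, mul_one_div, div_le_iff₀ hK]
      have h0 : (0:ℝ) ≤ ‖v y‖ := norm_nonneg _
      have h1 : (0:ℝ) ≤ (K:ℝ) := K.coe_nonneg
      nlinarith
  exact hpl.exists_eq_forall_mem_Icc_hasDerivWithinAt₀

lemma ode_glue {v : E → E} {a b c : ℝ} (hab : a ≤ b) (hbc : b ≤ c) {f₁ f₂ : ℝ → E}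
    (h₁ : ∀ t ∈ Icc a b, HasDerivWithinAt f₁ (v (f₁ t)) (Icc a b) t)
    (h₂ : ∀ t ∈ Icc b c, HasDerivWithinAt f₂ (v (f₂ t)) (Icc b c) t)
    (hagree : f₁ b = f₂ b) :
    ∃ g : ℝ → E, (∀ t ∈ Iic b, g t = f₁ t) ∧
      ∀ t ∈ Icc a c, HasDerivWithinAt g (v (g t)) (Icc a c) t := by
  set g : ℝ → E := fun t => if t ≤ b then f₁ t else f₂ t with hg
  have hg1 : ∀ t ∈ Iic b, g t = f₁ t := fun t ht => if_pos ht
  have hg2 : ∀ t ∈ Ici b, g t = f₂ t := by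
    intro t ht
    rcases eq_or_lt_of_le (mem_Ici.mp ht) with rfl | hlt
    · simpa [hg, hagree] using hagree
    · simp [hg, not_le.mpr hlt]
  refine ⟨g, hg1, ?_⟩
  intro t ht
  have key1 : ∀ s ∈ Icc a b, HasDerivWithinAt g (v (g s)) (Icc a b) s := by
    intro s hs
    have := (h₁ s hs).congr (fun y hy => hg1 y hy.2) (hg1 s hs.2)
    rwa [hg1 s hs.2]
  have key2 : ∀ s ∈ Icc b c, HasDerivWithinAt g (v (g s)) (Icc b c) s := by
    intro s hs
    have := (h₂ s hs).congr (fun y hy => hg2 y hy.1) (hg2 s hs.1)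
    rwa [hg2 s hs.1]
  rcases lt_trichotomy t b with hlt | rfl | hgt
  · have h1 := key1 t ⟨ht.1, hlt.le⟩
    apply h1.mono_of_mem_nhdsWithin
    have hsub : Icc a c ∩ Iio b ⊆ Icc a b := fun y hy => ⟨hy.1.1, hy.2.le⟩
    exact Filter.mem_of_superset (inter_mem_nhdsWithin _ (Iio_mem_nhds hlt)) hsub
  · have h1 := key1 t ⟨ht.1, le_refl _⟩
    have h2 := key2 t ⟨le_refl _, ht.2⟩
    have := h1.union h2
    rwa [Icc_union_Icc_eq_Icc ht.1 ht.2] at this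
  · have h2 := key2 t ⟨hgt.le, ht.2⟩
    apply h2.mono_of_mem_nhdsWithin
    have hsub : Icc a c ∩ Ioi b ⊆ Icc b c := fun y hy => ⟨hy.2.le, hy.1.2⟩
    exact Filter.mem_of_superset (inter_mem_nhdsWithin _ (Ioi_mem_nhds hgt)) hsub

lemma ode_global {v : E → E} {K : NNReal} (hv : LipschitzWith K v) (y₀ : E) :
    ∃ f : ℝ → E, f 0 = y₀ ∧ ∀ t ∈ Ici (0:ℝ), HasDerivWithinAt f (v (f t)) (Ici 0) t := by
  set δ : ℝ := 1/(1+(K:ℝ)) with hδ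
  have hδ0 : 0 < δ := by positivity
  -- solutions on [0, (n+1)δ]
  have main : ∀ n : ℕ, ∃ f : ℝ → E, f 0 = y₀ ∧ ∀ t ∈ Icc 0 ((n+1) * δ),
      HasDerivWithinAt f (v (f t)) (Icc 0 ((n+1) * δ)) t := by
    intro n
    induction n with
    | zero =>
      obtain ⟨f, hf0, hf⟩ := ode_step hv 0 y₀
      refine ⟨f, hf0, ?_⟩
      have : (0:ℝ) + δ = ((0:ℕ)+1) * δ := by push_cast; ring
      rw [← this]
      exact hf
    | succ n ih =>
      obtain ⟨f₁, hf0, hf⟩ := ih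
      obtain ⟨f₂, hf₂0, hf₂⟩ := ode_step hv (((n:ℝ)+1) * δ) (f₁ (((n:ℝ)+1) * δ))
      have hb : (0:ℝ) ≤ ((n:ℝ)+1) * δ := by positivity
      have hc : ((n:ℝ)+1) * δ ≤ ((n:ℝ)+1) * δ + δ := by linarith
      have heq : ((n:ℝ)+1) * δ + δ = (((n:ℕ)+1:ℕ)+1) * δ := by push_cast; ring
      obtain ⟨g, hgl, hgd⟩ := ode_glue hb hc hf (by rw [heq] at hf₂ ⊢; exact hf₂) hf₂0.symm
      refine ⟨g, ?_, by rwa [heq] at hgd⟩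
      rw [hgl 0 hb, hf0]
  choose F hF0 hFd using main
  -- uniqueness between the pieces
  have agree : ∀ m n : ℕ, m ≤ n → EqOn (F m) (F n) (Icc 0 ((m+1) * δ)) := by
    intro m n hmn
    have hle : ((m:ℝ)+1) * δ ≤ ((n:ℝ)+1) * δ := by
      have : ((m:ℝ)+1) ≤ (n:ℝ)+1 := by exact_mod_cast Nat.succ_le_succ hmn
      nlinarith
    have hsub : Icc (0:ℝ) ((m+1)*δ) ⊆ Icc 0 ((n+1)*δ) := Icc_subset_Icc_right hle
    apply ODE_solution_unique (v := fun _ y => v y) (K := K) (fun _ => hv)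
    · exact fun s hs => ((hFd m s hs).continuousWithinAt)
    · intro s hs
      apply (hFd m s ⟨hs.1, hs.2.le⟩).mono_of_mem_nhdsWithin
      have hsub2 : Ici s ∩ Iio (((m:ℝ)+1)*δ) ⊆ Icc 0 (((m:ℝ)+1)*δ) :=
        fun y hy => ⟨hs.1.trans hy.1, hy.2.le⟩
      exact Filter.mem_of_superset (inter_mem_nhdsWithin _ (Iio_mem_nhds hs.2)) hsub2
    · exact fun s hs => ((hFd n s (hsub hs)).continuousWithinAt).mono hsub
    · intro s hs
      apply (hFd n s (hsub ⟨hs.1, hs.2.le⟩)).mono_of_mem_nhdsWithin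
      have hsub2 : Ici s ∩ Iio (((m:ℝ)+1)*δ) ⊆ Icc 0 (((n:ℝ)+1)*δ) :=
        fun y hy => ⟨hs.1.trans hy.1, hy.2.le.trans hle⟩
      exact Filter.mem_of_superset (inter_mem_nhdsWithin _ (Iio_mem_nhds hs.2)) hsub2
    · rw [hF0 m, hF0 n]
  set f : ℝ → E := fun t => F ⌈t/δ⌉₊ t with hf
  have hmem : ∀ t : ℝ, 0 ≤ t → t ∈ Icc 0 ((⌈t/δ⌉₊ + 1) * δ) := by
    intro t ht
    refine ⟨ht, ?_⟩
    have h1 : t/δ ≤ (⌈t/δ⌉₊ : ℝ) := Nat.le_ceil _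
    have h2 : t ≤ (⌈t/δ⌉₊ : ℝ) * δ := by
      rw [div_le_iff₀ hδ0] at h1
      linarith
    nlinarith
  have hEq : ∀ n : ℕ, EqOn f (F n) (Icc 0 ((n+1) * δ)) := by
    intro n t ht
    have ht0 : 0 ≤ t := ht.1
    rcases le_total ⌈t/δ⌉₊ n with hle | hle
    · exact agree _ n hle (hmem t ht0)
    · exact (agree n _ hle ht).symm
  refine ⟨f, by rw [hEq 0 ⟨le_refl _, by positivity⟩, hF0], ?_⟩
  intro t ht
  set n : ℕ := ⌈t/δ⌉₊ with hn
  have htmem : t ∈ Icc 0 ((n+1) * δ) := hmem t ht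
  have htlt : t < ((n:ℝ)+1) * δ := by
    have h1 : t/δ ≤ (n : ℝ) := Nat.le_ceil _
    have h2 : t ≤ (n : ℝ) * δ := by rw [div_le_iff₀ hδ0] at h1; linarith
    nlinarith
  have hD := (hFd n t htmem).congr (fun y hy => hEq n hy) (hEq n htmem)
  rw [← hEq n htmem] at hD
  apply hD.mono_of_mem_nhdsWithin
  have hsub2 : Ici (0:ℝ) ∩ Iio (((n:ℝ)+1)*δ) ⊆ Icc 0 (((n:ℝ)+1)*δ) :=
    fun y hy => ⟨hy.1, hy.2.le⟩
  exact Filter.mem_of_superset (inter_mem_nhdsWithin _ (Iio_mem_nhds htlt)) hsub2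

end ODEglobal

section pdlemmas


variable {h : ℝ → ℝ → ℝ}

lemma hper_int (hper : ∀ a b : ℝ, h (a + 1) (b + 1) = h a b) :
    ∀ (m : ℤ) (a b : ℝ), h (a + m) (b + m) = h a b := by
  intro m
  induction m using Int.induction_on with
  | zero => simp
  | succ k ih =>
    intro a b
    rw [show a + (((k:ℤ)+1 : ℤ) : ℝ) = (a + ((k:ℤ):ℝ)) + 1 by push_cast; ring,
      show b + (((k:ℤ)+1 : ℤ) : ℝ) = (b + ((k:ℤ):ℝ)) + 1 by push_cast; ring,
      hper, ih]
  | pred k ih =>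
    intro a b
    have h1 := hper (a + ((-(k:ℤ)-1 : ℤ) : ℝ)) (b + ((-(k:ℤ)-1 : ℤ) : ℝ))
    rw [show a + ((-(k:ℤ)-1 : ℤ) : ℝ) + 1 = a + ((-(k:ℤ) : ℤ) : ℝ) by push_cast; ring,
      show b + ((-(k:ℤ)-1 : ℤ) : ℝ) + 1 = b + ((-(k:ℤ) : ℤ) : ℝ) by push_cast; ring,
      ih] at h1
    rw [← h1]

lemma pd2_shift (hper : ∀ a b : ℝ, h (a + 1) (b + 1) = h a b) (m : ℤ) (a b : ℝ) :
    pd2 h (a + m) (b + m) = pd2 h a b := by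
  have hfun : (fun s => h (a + m) s) = fun s => h a (s - m) := by
    funext s
    have := hper_int hper m a (s - m)
    rw [sub_add_cancel] at this
    exact this
  unfold pd2
  rw [hfun, deriv_comp_sub_const, add_sub_cancel_right]

lemma pd1_shift (hper : ∀ a b : ℝ, h (a + 1) (b + 1) = h a b) (m : ℤ) (a b : ℝ) :
    pd1 h (a + m) (b + m) = pd1 h a b := by
  have hfun : (fun s => h s (b + m)) = fun s => h (s - m) b := by
    funext s
    have := hper_int hper m (s - m) b
    rw [sub_add_cancel] at this
    exact this
  unfold pd1
  calc deriv (fun s => h s (b + (m:ℝ))) (a + (m:ℝ))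
      = deriv (fun s => h (s - (m:ℝ)) b) (a + (m:ℝ)) := by rw [hfun]
    _ = deriv (fun y => h y b) (a + (m:ℝ) - (m:ℝ)) :=
        deriv_comp_sub_const (fun y => h y b) (m:ℝ) (a + (m:ℝ))
    _ = deriv (fun y => h y b) a := by rw [add_sub_cancel_right]

lemma pd1_eq_fderiv (hd : Differentiable ℝ (Function.uncurry h)) (a b : ℝ) :
    pd1 h a b = fderiv ℝ (Function.uncurry h) (a, b) (1, 0) := by
  have h1 : HasDerivAt (fun s : ℝ => (s, b)) ((1:ℝ), (0:ℝ)) a :=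
    (hasDerivAt_id a).prodMk (hasDerivAt_const a b)
  have h2 := (hd (a, b)).hasFDerivAt.comp_hasDerivAt a h1
  have h3 := h2.deriv
  unfold pd1
  rw [← h3]
  rfl

lemma pd2_eq_fderiv (hd : Differentiable ℝ (Function.uncurry h)) (a b : ℝ) :
    pd2 h a b = fderiv ℝ (Function.uncurry h) (a, b) (0, 1) := by
  have h1 : HasDerivAt (fun s : ℝ => (a, s)) ((0:ℝ), (1:ℝ)) b :=
    (hasDerivAt_const b a).prodMk (hasDerivAt_id b)
  have h2 := (hd (a, b)).hasFDerivAt.comp_hasDerivAt b h1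
  have h3 := h2.deriv
  unfold pd2
  rw [← h3]
  rfl

lemma G_lip (hC2 : ContDiff ℝ 2 (Function.uncurry h)) {C : ℝ}
    (hbd : ∀ v : ℝ × ℝ, ‖iteratedFDeriv ℝ 2 (Function.uncurry h) v‖ ≤ C) :
    LipschitzWith C.toNNReal (iteratedFDeriv ℝ 1 (Function.uncurry h)) := by
  have hC0 : 0 ≤ C := (norm_nonneg _).trans (hbd 0)
  have hG1 : ContDiff ℝ 1 (iteratedFDeriv ℝ 1 (Function.uncurry h)) :=
    hC2.iteratedFDeriv_right (by norm_num)
  apply lipschitzWith_of_nnnorm_fderiv_le (hG1.differentiable (by norm_num))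
  intro x
  rw [← NNReal.coe_le_coe, coe_nnnorm, Real.coe_toNNReal _ hC0,
    norm_fderiv_iteratedFDeriv]
  exact hbd x

lemma pd_apply_eq (hd : Differentiable ℝ (Function.uncurry h)) (u : ℝ × ℝ) (e : ℝ × ℝ) :
    fderiv ℝ (Function.uncurry h) u e
      = iteratedFDeriv ℝ 1 (Function.uncurry h) u (fun _ => e) := by
  rw [iteratedFDeriv_one_apply]

lemma pd1_lip (hC2 : ContDiff ℝ 2 (Function.uncurry h)) {C : ℝ}
    (hbd : ∀ v : ℝ × ℝ, ‖iteratedFDeriv ℝ 2 (Function.uncurry h) v‖ ≤ C)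
    (u w : ℝ × ℝ) :
    |pd1 h u.1 u.2 - pd1 h w.1 w.2| ≤ C * ‖u - w‖ ∧
    |pd2 h u.1 u.2 - pd2 h w.1 w.2| ≤ C * ‖u - w‖ := by
  have hC0 : 0 ≤ C := (norm_nonneg _).trans (hbd 0)
  have hd : Differentiable ℝ (Function.uncurry h) := hC2.differentiable (by norm_num)
  have hlip := G_lip hC2 hbd
  have hdist : dist (iteratedFDeriv ℝ 1 (Function.uncurry h) u)
      (iteratedFDeriv ℝ 1 (Function.uncurry h) w) ≤ C * ‖u - w‖ := by
    have := hlip.dist_le_mul u w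
    rwa [Real.coe_toNNReal _ hC0, dist_eq_norm u w] at this
  have key : ∀ e : ℝ × ℝ, ‖e‖ = 1 →
      |fderiv ℝ (Function.uncurry h) u e - fderiv ℝ (Function.uncurry h) w e| ≤ C * ‖u - w‖ := by
    intro e he
    rw [pd_apply_eq hd u e, pd_apply_eq hd w e]
    set Gu := iteratedFDeriv ℝ 1 (Function.uncurry h) u
    set Gw := iteratedFDeriv ℝ 1 (Function.uncurry h) w
    have h1 : |Gu (fun _ => e) - Gw (fun _ => e)| = ‖(Gu - Gw) (fun _ => e)‖ := by
      rw [ContinuousMultilinearMap.sub_apply]; rfl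
    rw [h1]
    have h2 := (Gu - Gw).le_opNorm (fun _ => e)
    have h3 : (∏ i : Fin 1, ‖(fun _ : Fin 1 => e) i‖) = 1 := by simp [he]
    rw [h3, mul_one] at h2
    calc ‖(Gu - Gw) (fun _ => e)‖ ≤ ‖Gu - Gw‖ := h2
      _ ≤ C * ‖u - w‖ := by rwa [dist_eq_norm] at hdist
  have he1 : ‖((1:ℝ), (0:ℝ))‖ = 1 := by
    simp [Prod.norm_def]
  have he2 : ‖((0:ℝ), (1:ℝ))‖ = 1 := by
    simp [Prod.norm_def]
  constructor
  · rw [pd1_eq_fderiv hd u.1 u.2, pd1_eq_fderiv hd w.1 w.2]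
    simpa using key _ he1
  · rw [pd2_eq_fderiv hd u.1 u.2, pd2_eq_fderiv hd w.1 w.2]
    simpa using key _ he2

end pdlemmas

section cfg


variable {p : ℤ} {q : ℕ}

lemma config_shift {x : ℤ → ℝ} (hx : IsConfig p q x) (n : ℤ) :
    ∀ m : ℤ, x (n + m * q) = x n + m * p := by
  have hdown : ∀ k : ℤ, x (k - q) = x k - p := by
    intro k
    have := hx (k - q)
    rw [sub_add_cancel] at this
    rw [this]; ring
  intro m
  induction m using Int.induction_on with
  | zero => simp
  | succ k ih =>
    have h1 : n + ((k:ℤ)+1) * q = (n + k * q) + q := by ring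
    rw [h1, hx, ih]; push_cast; ring
  | pred k ih =>
    have h1 : n + (-(k:ℤ)-1) * q = (n + (-(k:ℤ)) * q) - q := by ring
    rw [h1, hdown, ih]; push_cast; ring

def idx (q : ℕ) (hq : 0 < q) (n : ℤ) : Fin q :=
  ⟨(n % q).toNat, by
    have hq' : (q:ℤ) ≠ 0 := by exact_mod_cast hq.ne'
    have h1 : 0 ≤ n % q := Int.emod_nonneg n hq'
    have h2 : n % q < q := Int.emod_lt_of_pos n (by exact_mod_cast hq)
    omega⟩

lemma idx_coe (hq : 0 < q) (n : ℤ) : ((idx q hq n : ℕ) : ℤ) = n % q := by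
  have hq' : (q:ℤ) ≠ 0 := by exact_mod_cast hq.ne'
  exact Int.toNat_of_nonneg (Int.emod_nonneg n hq')

lemma idx_fin (hq : 0 < q) (i : Fin q) : idx q hq ((i : ℕ) : ℤ) = i := by
  have h1 : ((i:ℕ):ℤ) % q = ((i:ℕ):ℤ) := Int.emod_eq_of_lt (by positivity) (by exact_mod_cast i.2)
  apply Fin.ext
  simp [idx, h1]

noncomputable def extc (p : ℤ) {q : ℕ} (hq : 0 < q) (y : Fin q → ℝ) (n : ℤ) : ℝ :=
  y (idx q hq n) + (p : ℝ) * ((n / q : ℤ) : ℝ)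

lemma extc_fin (hq : 0 < q) (y : Fin q → ℝ) (i : Fin q) :
    extc p hq y ((i : ℕ) : ℤ) = y i := by
  have h2 : ((i:ℕ):ℤ) / q = 0 :=
    Int.ediv_eq_zero_of_lt (by positivity) (by exact_mod_cast i.2)
  rw [extc, idx_fin hq i, h2]
  simp

lemma extc_config (hq : 0 < q) (y : Fin q → ℝ) : IsConfig p q (extc p hq y) := by
  intro n
  have h1 : (n + q) % q = n % q := by
    simpa using Int.add_mul_emod_self_left (a := n) (b := (q:ℤ)) (c := 1)
  have h2 : (n + q) / q = n / q + 1 := by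
    have := Int.add_mul_ediv_right n 1 (by exact_mod_cast hq.ne' : (q:ℤ) ≠ 0)
    simpa using this
  have h3 : idx q hq (n + q) = idx q hq n := by
    apply Fin.ext; simp [idx, h1]
  rw [extc, extc, h3, h2]
  push_cast; ring

lemma config_eq_extc (hq : 0 < q) {x : ℤ → ℝ} (hx : IsConfig p q x) (n : ℤ) :
    x n = extc p hq (fun i => x ((i : ℕ) : ℤ)) n := by
  have hsplit : n % q + (n / q) * q = n := Int.emod_add_ediv_mul n q
  have h1 : x n = x (n % q) + ((n/q : ℤ) : ℝ) * ((p:ℤ) : ℝ) := by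
    rw [← hsplit, config_shift hx]
    rw [hsplit]
  rw [h1, extc, idx_coe hq n]
  ring

lemma extc_shift (hq : 0 < q) (y : Fin q → ℝ) (n : ℤ) (m : ℤ) :
    extc p hq y (n + m * q) = extc p hq y n + m * p :=
  config_shift (extc_config hq y) n m

end cfg

section main

variable {p : ℤ} {q : ℕ} {h : ℝ → ℝ → ℝ}

/-- The vector field on the finite-dimensional reduction. -/
noncomputable def vfield (h : ℝ → ℝ → ℝ) (p : ℤ) {q : ℕ} (hq : 0 < q)
    (y : Fin q → ℝ) : Fin q → ℝ := fun i =>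
  -(pd2 h (extc p hq y (((i:ℕ):ℤ) - 1)) (extc p hq y ((i:ℕ):ℤ)) +
    pd1 h (extc p hq y ((i:ℕ):ℤ)) (extc p hq y (((i:ℕ):ℤ) + 1)))

lemma vfield_lip (hq : 0 < q) (hC2 : ContDiff ℝ 2 (Function.uncurry h)) {C : ℝ}
    (hbd : ∀ v : ℝ × ℝ, ‖iteratedFDeriv ℝ 2 (Function.uncurry h) v‖ ≤ C) :
    LipschitzWith (Real.toNNReal (2*C)) (vfield h p hq) := by
  have hC0 : 0 ≤ C := (norm_nonneg _).trans (hbd 0)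
  have hext_sub : ∀ (y z : Fin q → ℝ) (n : ℤ),
      |extc p hq y n - extc p hq z n| ≤ dist y z := by
    intro y z n
    have e : extc p hq y n - extc p hq z n = y (idx q hq n) - z (idx q hq n) := by
      simp [extc]
    rw [e, ← Real.dist_eq]
    exact dist_le_pi_dist y z _
  apply LipschitzWith.of_dist_le_mul
  intro y z
  rw [Real.coe_toNNReal _ (by positivity)]
  rw [dist_pi_le_iff (by positivity)]
  intro i
  rw [Real.dist_eq]
  have key : ∀ n n' : ℤ,
      ‖((extc p hq y n, extc p hq y n') - (extc p hq z n, extc p hq z n') : ℝ × ℝ)‖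
        ≤ dist y z := by
    intro n n'
    rw [Prod.norm_def]
    apply max_le
    · simpa [Real.norm_eq_abs] using hext_sub y z n
    · simpa [Real.norm_eq_abs] using hext_sub y z n'
  set k : ℤ := ((i:ℕ):ℤ)
  have h2 := (pd1_lip hC2 hbd (extc p hq y (k-1), extc p hq y k)
    (extc p hq z (k-1), extc p hq z k)).2
  have h1 := (pd1_lip hC2 hbd (extc p hq y k, extc p hq y (k+1))
    (extc p hq z k, extc p hq z (k+1))).1
  simp only at h1 h2
  have b2 : |pd2 h (extc p hq y (k-1)) (extc p hq y k)
      - pd2 h (extc p hq z (k-1)) (extc p hq z k)| ≤ C * dist y z := by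
    refine h2.trans ?_
    have := key (k-1) k
    nlinarith [abs_nonneg (pd2 h (extc p hq y (k-1)) (extc p hq y k)
      - pd2 h (extc p hq z (k-1)) (extc p hq z k)), norm_nonneg
      ((extc p hq y (k-1), extc p hq y k) - (extc p hq z (k-1), extc p hq z k) : ℝ × ℝ)]
  have b1 : |pd1 h (extc p hq y k) (extc p hq y (k+1))
      - pd1 h (extc p hq z k) (extc p hq z (k+1))| ≤ C * dist y z := by
    refine h1.trans ?_
    have := key k (k+1)
    nlinarith [norm_nonneg
      ((extc p hq y k, extc p hq y (k+1)) - (extc p hq z k, extc p hq z (k+1)) : ℝ × ℝ)]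
  have expand : vfield h p hq y i - vfield h p hq z i =
      -((pd2 h (extc p hq y (k-1)) (extc p hq y k)
        - pd2 h (extc p hq z (k-1)) (extc p hq z k))
      + (pd1 h (extc p hq y k) (extc p hq y (k+1))
        - pd1 h (extc p hq z k) (extc p hq z (k+1)))) := by
    simp only [vfield]; ring
  rw [expand, abs_neg]
  calc |_ + _| ≤ _ + _ := abs_add_le _ _
    _ ≤ C * dist y z + C * dist y z := add_le_add b2 b1
    _ = 2 * C * dist y z := by ring

/-- Global existence and uniqueness of the gradient semiflow: for every initial
(p,q)-configuration there is a unique solution of the gradient flow on [0,∞). -/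
theorem gradient_semiflow_exists_unique
    (p : ℤ) (q : ℕ) (hq : 0 < q) (hpq : IsCoprime p (q : ℤ))
    (h : ℝ → ℝ → ℝ) (hC2 : ContDiff ℝ 2 (Function.uncurry h))
    (htwist : ∀ a b : ℝ, pd12 h a b < 0)
    (hper : ∀ a b : ℝ, h (a + 1) (b + 1) = h a b)
    (hbd : ∃ C : ℝ, ∀ v : ℝ × ℝ, ‖iteratedFDeriv ℝ 2 (Function.uncurry h) v‖ ≤ C)
    (x : ℤ → ℝ) (hx : IsConfig p q x) :
    ∃ ξ : ℝ → ℤ → ℝ, (IsGradSol h p q (Set.Ici 0) ξ ∧ ξ 0 = x) ∧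
      ∀ η : ℝ → ℤ → ℝ, IsGradSol h p q (Set.Ici 0) η → η 0 = x →
        ∀ t ∈ Set.Ici (0 : ℝ), η t = ξ t := by
  clear htwist hpq
  obtain ⟨C, hbdC⟩ := hbd
  have hlip := vfield_lip (p := p) hq hC2 hbdC
  obtain ⟨g, hg0, hgd⟩ := ode_global hlip (fun i : Fin q => x ((i:ℕ):ℤ))
  -- key: value of the vector field in terms of extc
  have hval : ∀ (y : Fin q → ℝ) (k : ℤ), vfield h p hq y (idx q hq k) =
      -(pd2 h (extc p hq y (k-1)) (extc p hq y k)
        + pd1 h (extc p hq y k) (extc p hq y (k+1))) := by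
    intro y k
    have hsplit : k % q + (k / q) * q = k := Int.emod_add_ediv_mul k q
    have Em : extc p hq y (k-1) = extc p hq y (k % q - 1) + (((k/q) * p : ℤ) : ℝ) := by
      have e := extc_shift (p := p) hq y (k % q - 1) (k / q)
      rw [show k % q - 1 + k / q * q = k - 1 from by omega] at e
      rw [e]; push_cast; ring
    have E0 : extc p hq y k = extc p hq y (k % q) + (((k/q) * p : ℤ) : ℝ) := by
      have e := extc_shift (p := p) hq y (k % q) (k / q)
      rw [show k % q + k / q * q = k from by omega] at e
      rw [e]; push_cast; ring
    have Ep : extc p hq y (k+1) = extc p hq y (k % q + 1) + (((k/q) * p : ℤ) : ℝ) := by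
      have e := extc_shift (p := p) hq y (k % q + 1) (k / q)
      rw [show k % q + 1 + k / q * q = k + 1 from by omega] at e
      rw [e]; push_cast; ring
    rw [vfield]
    simp only [idx_coe hq k]
    rw [Em, E0, Ep, pd2_shift hper ((k/q)*p), pd1_shift hper ((k/q)*p)]
  -- the candidate solution
  refine ⟨fun t n => extc p hq (g t) n, ⟨⟨fun t _ => extc_config hq (g t), ?_⟩, ?_⟩, ?_⟩
  · -- derivative condition
    intro k t ht
    have hcomp := (hasDerivWithinAt_pi.mp (hgd t ht)) (idx q hq k)
    have hder := hcomp.add_const ((p : ℝ) * (((k / (q:ℤ)) : ℤ) : ℝ))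
    have : HasDerivWithinAt (fun s => extc p hq (g s) k)
        (vfield h p hq (g t) (idx q hq k)) (Ici 0) t := hder
    rw [hval (g t) k] at this
    exact this
  · -- initial condition
    funext n
    show extc p hq (g 0) n = x n
    rw [hg0]
    exact (config_eq_extc hq hx n).symm
  · -- uniqueness
    intro η hη hη0 t ht
    set gη : ℝ → Fin q → ℝ := fun s i => η s ((i:ℕ):ℤ) with hgη
    have hηd : ∀ s ∈ Ici (0:ℝ), HasDerivWithinAt gη (vfield h p hq (gη s)) (Ici 0) s := by
      intro s hs
      rw [hasDerivWithinAt_pi]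
      intro i
      have hd := hη.2 ((i:ℕ):ℤ) s hs
      have he : ∀ n, η s n = extc p hq (gη s) n := config_eq_extc hq (hη.1 s hs)
      have hval2 : vfield h p hq (gη s) i =
          -(pd2 h (η s (((i:ℕ):ℤ) - 1)) (η s ((i:ℕ):ℤ))
            + pd1 h (η s ((i:ℕ):ℤ)) (η s (((i:ℕ):ℤ)+1))) := by
        rw [vfield, ← he, ← he, ← he]
      rw [hval2]
      exact hd
    have heq : gη t = g t := by
      have key := ODE_solution_unique (v := fun _ y => vfield h p hq y)
        (K := Real.toNNReal (2*C)) (f := gη) (g := g) (a := 0) (b := t)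
        (fun _ => hlip)
        (fun s hs => ((hηd s hs.1).continuousWithinAt).mono (fun y hy => hy.1))
        (fun s hs => (hηd s hs.1).mono (Ici_subset_Ici.mpr hs.1))
        (fun s hs => ((hgd s hs.1).continuousWithinAt).mono (fun y hy => hy.1))
        (fun s hs => (hgd s hs.1).mono (Ici_subset_Ici.mpr hs.1))
        (by rw [hg0]; funext i; simp [hgη, hη0])
      exact key ⟨ht, le_refl t⟩
    funext n
    show η t n = extc p hq (g t) n
    have h1 := config_eq_extc hq (hη.1 t ht) n
    have h2 : (fun i : Fin q => η t ((i:ℕ):ℤ)) = g t := heq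
    rw [h1, h2]

end main
end ODEglobal
end
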